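/- Let $\phi$ be invertible in $L^\infty(\mathbb{T})$ and define $\psi(t) = \phi^{-1}(-t^{-1})$. Then $\Phi(\phi) = P L(\phi) P_J : L^2_J(\mathbb{T}) \to H^2(\mathbb{T})$ is invertible if and only if $\Psi(\psi) = P_J L(\psi) P : H^2(\mathbb{T}) \to L^2_J(\mathbb{T})$ is invertible. -/

import Mathlib

/-!
`Φ(φ)` is invertible iff `L(φ) L²_J` and `ker P = (H²)ᗮ` are complementary subspaces of `L²`, and
`Ψ(ψ)` is invertible iff `L(ψ) H²` and `ker P_J` are. The invertible operator `U = J W L(φ⁻¹)`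
carries the first pair onto the second: `J W` maps `L²_J` onto `ker P_J` because `W J = -J W`,
and `(H²)ᗮ` onto `H²` because it sends `t⁻ⁿ⁻¹` to a unimodular multiple of `tⁿ`; finally
`J W L(φ⁻¹) = L(ψ) J W`.
-/

open MeasureTheory Complex Real
noncomputable section
namespace TH

abbrev Tp : ℝ := 2 * Real.pi
instance : Fact (0 < Tp) := ⟨by positivity⟩
abbrev 𝕋 := AddCircle Tp
abbrev μ : Measure 𝕋 := AddCircle.haarAddCircle
abbrev L2 := Lp ℂ 2 μ

open scoped Classical in
/-- Multiplication operator by `φ` (defined to be `0` if `φ` is not essentially bounded). -/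
def Lmul (φ : 𝕋 → ℂ) : L2 →L[ℂ] L2 :=
  if hφ : MemLp φ ⊤ μ then
    LinearMap.mkContinuous
      { toFun := fun f => ((Lp.memLp f).smul (r := 2) hφ).toLp (φ • ⇑f)
        map_add' := fun f g => by
          rw [← MemLp.toLp_add]
          exact MemLp.toLp_congr _ _ (by
            filter_upwards [Lp.coeFn_add f g] with x hx
            simp only [Pi.smul_apply, smul_eq_mul, Pi.mul_apply, hx, Pi.add_apply, mul_add])
        map_smul' := fun c f => by
          rw [RingHom.id_apply, ← MemLp.toLp_const_smul]
          exact MemLp.toLp_congr ((Lp.memLp (c • f)).smul (r := 2) hφ)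
            (((Lp.memLp f).smul (r := 2) hφ).const_smul c) (by
            filter_upwards [Lp.coeFn_smul c f] with x hx
            simp only [Pi.smul_apply, smul_eq_mul, Pi.mul_apply, hx]
            ring) }
      (eLpNorm φ ⊤ μ).toReal
      (fun f => by
        simp only [LinearMap.coe_mk, AddHom.coe_mk]
        rw [Lp.norm_toLp, Lp.norm_def, ← ENNReal.toReal_mul]
        refine ENNReal.toReal_mono ?_ ?_
        · exact ENNReal.mul_ne_top hφ.eLpNorm_ne_top (Lp.eLpNorm_ne_top f)
        · exact eLpNorm_smul_le_eLpNorm_top_mul_eLpNorm 2 (Lp.aestronglyMeasurable f) φ)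
  else 0

/-- Composition with `x ↦ -x` on `L²`. -/
def Cneg : L2 → L2 :=
  Lp.compMeasurePreserving (fun x : 𝕋 => -x) (Measure.measurePreserving_neg μ)

/-- The flip operator `J : f(t) ↦ t⁻¹ f(t⁻¹)`. -/
def Jop : L2 →L[ℂ] L2 :=
  { toFun := fun f => Lmul (fun x => fourier (-1) x) (Cneg f)
    map_add' := fun f g => by
      show Lmul _ (Cneg (f + g)) = Lmul _ (Cneg f) + Lmul _ (Cneg g)
      unfold Cneg
      rw [map_add, map_add]
    map_smul' := fun c f => by
      show Lmul _ (Cneg (c • f)) = c • Lmul _ (Cneg f)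
      rw [← map_smul (Lmul fun x => fourier (-1) x)]
      congr 1
      apply Lp.ext
      unfold Cneg
      filter_upwards [Lp.coeFn_compMeasurePreserving (c • f) (Measure.measurePreserving_neg μ),
        Lp.coeFn_smul c (Lp.compMeasurePreserving (fun x : 𝕋 => -x)
          (Measure.measurePreserving_neg μ) f),
        (Measure.measurePreserving_neg μ).quasiMeasurePreserving.ae_eq_comp (Lp.coeFn_smul c f),
        Lp.coeFn_compMeasurePreserving f (Measure.measurePreserving_neg μ)]
        with x hx1 hx2 hx3 hx4
      refine hx1.trans (hx3.trans ?_)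
      have h5 : ((c • (↑↑f : 𝕋 → ℂ)) ∘ Neg.neg) x = c • (↑↑f ∘ Neg.neg) x := rfl
      rw [h5, ← hx4]
      exact hx2.symm
    cont := by
      exact (Lmul _).continuous.comp
        (Lp.isometry_compMeasurePreserving (E := ℂ) (p := 2)
          (Measure.measurePreserving_neg μ)).continuous }

/-- The Hardy space `H²(𝕋)`: closed span of `{t^n : n ≥ 0}`. -/
def Hardy : Submodule ℂ L2 :=
  (Submodule.span ℂ (Set.range fun n : ℕ => (fourierLp 2 (n : ℤ) : L2))).topologicalClosure

instance : CompleteSpace Hardy :=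
  IsClosed.completeSpace_coe (hs := Submodule.isClosed_topologicalClosure _)

/-- The Riesz projection, as an operator on `L²(𝕋)`. -/
def Pproj : L2 →L[ℂ] L2 := Hardy.subtypeL ∘L Hardy.orthogonalProjectionOnto

/-- The Toeplitz operator `T(φ) : f ↦ P(φ f)` on `H²`. -/
def Top (φ : 𝕋 → ℂ) : Hardy →L[ℂ] Hardy :=
  Hardy.orthogonalProjectionOnto ∘L Lmul φ ∘L Hardy.subtypeL

/-- The Hankel operator `H(φ) : f ↦ P(φ · Jf)` on `H²`. -/
def Hop (φ : 𝕋 → ℂ) : Hardy →L[ℂ] Hardy :=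
  Hardy.orthogonalProjectionOnto ∘L Lmul φ ∘L Jop ∘L Hardy.subtypeL

/-- The Toeplitz + Hankel operator `M(φ) = T(φ) + H(φ)`. -/
def Mop (φ : 𝕋 → ℂ) : Hardy →L[ℂ] Hardy := Top φ + Hop φ

/-- The flip `φ̃(t) = φ(t⁻¹)` of a function on the circle. -/
def flip (φ : 𝕋 → ℂ) : 𝕋 → ℂ := fun x => φ (-x)


/-- The projection `P_J = (I+J)/2` on `L²(𝕋)`. -/
def PJ : L2 →L[ℂ] L2 := (2 : ℂ)⁻¹ • (1 + Jop)

/-- `L²_J(𝕋) = im P_J`. -/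
def L2J : Submodule ℂ L2 := LinearMap.range (PJ : L2 →ₗ[ℂ] L2)

/-- `A = (I+J)P : H² → L²_J`. -/
def Aop : Hardy →L[ℂ] L2J :=
  ((1 + Jop) ∘L Hardy.subtypeL).codRestrict L2J (fun v =>
    LinearMap.mem_range.mpr ⟨(2 : ℂ) • (Hardy.subtypeL v), by
      show (2 : ℂ)⁻¹ • ((1 + Jop) ((2 : ℂ) • (Hardy.subtypeL v))) = (1 + Jop) (Hardy.subtypeL v)
      rw [_root_.map_smul, smul_smul]
      norm_num⟩)

/-- `B = ½ P (I+J) : L²_J → H²`. -/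
def Bop : L2J →L[ℂ] Hardy :=
  (2 : ℂ)⁻¹ • (Hardy.orthogonalProjectionOnto ∘L (1 + Jop) ∘L L2J.subtypeL)

/-- `Φ(φ) = P L(φ) P_J : L²_J → H²`. -/
def Phi (φ : 𝕋 → ℂ) : L2J →L[ℂ] Hardy :=
  Hardy.orthogonalProjectionOnto ∘L Lmul φ ∘L PJ ∘L L2J.subtypeL

/-- `Ψ(ψ) = P_J L(ψ) P : H² → L²_J`. -/
def Psi (ψ : 𝕋 → ℂ) : Hardy →L[ℂ] L2J :=
  (PJ ∘L Lmul ψ ∘L Hardy.subtypeL).codRestrict L2J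
    (fun v => LinearMap.mem_range.mpr ⟨(Lmul ψ ∘L Hardy.subtypeL) v, rfl⟩)

open Filter Submodule

section Complements

variable {R E F : Type*} [Ring R] [AddCommGroup E] [Module R E] [AddCommGroup F] [Module R F]

theorem _root_.Submodule.isCompl_map_iff_of_bijective {T : E →ₗ[R] F} (hT : Function.Bijective T)
    {X Y : Submodule R E} : IsCompl (X.map T) (Y.map T) ↔ IsCompl X Y :=
  (orderIsoMapComapOfBijective T hT).isCompl_iff.symm

theorem _root_.LinearMap.bijective_domRestrict_comp_iff {q : E →ₗ[R] F}
    (hq : Function.Surjective q) {T : E →ₗ[R] E} (hT : Function.Bijective T) (V : Submodule R E) :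
    Function.Bijective ((q ∘ₗ T).domRestrict V) ↔ IsCompl (V.map T) (LinearMap.ker q) := by
  rw [Function.Bijective, LinearMap.injective_domRestrict_iff,
    LinearMap.surjective_domRestrict_iff (f := q ∘ₗ T) (hq.comp hT.2), ← isCompl_iff,
    ← isCompl_map_iff_of_bijective hT, LinearMap.ker_comp, map_comap_eq_of_surjective hT.2]

end Complements

theorem _root_.HilbertBasis.orthogonal_topologicalClosure_span_image {ι 𝕜 E : Type*} [RCLike 𝕜]
    [NormedAddCommGroup E] [InnerProductSpace 𝕜 E] (b : HilbertBasis ι 𝕜 E) (s : Set ι) :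
    (span 𝕜 (b '' s)).topologicalClosureᗮ = (span 𝕜 (b '' sᶜ)).topologicalClosure := by
  rw [orthogonal_closure]
  apply le_antisymm
  · intro x hx
    have hcoeff : ∀ i ∈ s, b.repr x i = 0 := fun i hi => by
      rw [b.repr_apply_apply]
      exact (mem_orthogonal _ x).mp hx _ (subset_span ⟨i, hi, rfl⟩)
    refine mem_closure_of_tendsto (b.hasSum_repr x) (Eventually.of_forall fun t => ?_)
    refine sum_mem fun i _ => ?_
    by_cases hi : i ∈ s
    · simp [hcoeff i hi]
    · exact smul_mem _ _ (subset_span ⟨i, hi, rfl⟩)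
  · refine topologicalClosure_minimal _ (IsOrtho.le ?_) (isClosed_orthogonal _)
    rw [isOrtho_span]
    rintro _ ⟨j, hj, rfl⟩ _ ⟨i, hi, rfl⟩
    exact b.orthonormal.2 (ne_of_mem_of_not_mem hi hj).symm

theorem _root_.ContinuousLinearEquiv.map_topologicalClosure {R E F : Type*} [Semiring R]
    [TopologicalSpace E] [AddCommMonoid E] [Module R E] [ContinuousAdd E] [ContinuousConstSMul R E]
    [TopologicalSpace F] [AddCommMonoid F] [Module R F] [ContinuousAdd F] [ContinuousConstSMul R F]
    (e : E ≃L[R] F) (K : Submodule R E) :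
    K.topologicalClosure.map (e : E →ₗ[R] F) = (K.map (e : E →ₗ[R] F)).topologicalClosure :=
  SetLike.coe_injective (e.toHomeomorph.image_closure K)

lemma measurePreserving_pi_sub : MeasurePreserving (fun x : 𝕋 => ((π : ℝ) : 𝕋) - x) μ μ :=
  Measure.measurePreserving_sub_left μ _

lemma neg_coe_pi : -((π : ℝ) : 𝕋) = ((π : ℝ) : 𝕋) := by
  rw [neg_eq_iff_add_eq_zero, ← AddCircle.coe_add, ← two_mul]
  exact AddCircle.coe_period (p := Tp)

lemma fourier_neg_one_pi : fourier (-1) ((π : ℝ) : 𝕋) = -1 := by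
  rw [fourier_coe_apply]
  have : 2 * (π : ℂ) * I * ((-1 : ℤ) : ℂ) * π / (Tp : ℝ) = -(π * I) := by
    push_cast; field_simp
  rw [this, Complex.exp_neg, exp_pi_mul_I]; norm_num

lemma fourier_add_apply (n : ℤ) (x y : 𝕋) : fourier n (x + y) = fourier n x * fourier n y := by
  simp_rw [fourier_apply, smul_add, AddCircle.toCircle_add, Circle.coe_mul]

lemma fourier_neg_apply (n : ℤ) (x : 𝕋) : fourier n (-x) = fourier (-n) x := by
  rw [fourier_apply, fourier_apply, smul_neg, neg_smul]

lemma fourier_sub_apply (n : ℤ) (x y : 𝕋) :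
    fourier n (x - y) = fourier n x * fourier (-n) y := by
  rw [sub_eq_add_neg, fourier_add_apply, fourier_neg_apply]

lemma fourier_apply_ne_zero (n : ℤ) (x : 𝕋) : fourier n x ≠ 0 := by
  rw [fourier_apply]
  exact Circle.coe_ne_zero _

lemma memLp_top_fourier (n : ℤ) : MemLp (fun x : 𝕋 => fourier n x) ⊤ μ :=
  memLp_top_of_bound (fourier n).continuous.aestronglyMeasurable 1
    (Eventually.of_forall fun _ => (Circle.norm_coe _).le)

lemma coeFn_Lmul {φ : 𝕋 → ℂ} (hφ : MemLp φ ⊤ μ) (f : L2) :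
    ⇑(Lmul φ f) =ᵐ[μ] fun x => φ x * f x := by
  rw [Lmul, dif_pos hφ]
  exact MemLp.coeFn_toLp ((Lp.memLp f).smul hφ)

lemma coeFn_Jop (f : L2) : ⇑(Jop f) =ᵐ[μ] fun x => fourier (-1) x * f (-x) := by
  filter_upwards [coeFn_Lmul (memLp_top_fourier (-1)) (Cneg f),
    Lp.coeFn_compMeasurePreserving f (Measure.measurePreserving_neg μ)] with x hJ hC
  exact hJ.trans (congrArg _ hC)

/-- `W : f(t) ↦ f(-t)`; on `𝕋 = ℝ/2πℤ` the point `-t` is `x + π`. -/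
def Wop : L2 →L[ℂ] L2 :=
  (Lp.compMeasurePreservingₗᵢ ℂ (fun x : 𝕋 => x + ((π : ℝ) : 𝕋))
    (measurePreserving_add_right μ _)).toContinuousLinearMap

lemma coeFn_Wop (f : L2) : ⇑(Wop f) =ᵐ[μ] fun x => f (x + ((π : ℝ) : 𝕋)) :=
  Lp.coeFn_compMeasurePreserving f (measurePreserving_add_right μ _)

lemma Jop_Jop (f : L2) : Jop (Jop f) = f := by
  apply Lp.ext
  filter_upwards [coeFn_Jop (Jop f),
    (Measure.measurePreserving_neg μ).quasiMeasurePreserving.ae_eq_comp (coeFn_Jop f)]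
    with x h h'
  simp only [Function.comp_apply, neg_neg] at h'
  rw [h, h', ← mul_assoc, fourier_neg_apply, ← fourier_add]
  simp

lemma Wop_Wop (f : L2) : Wop (Wop f) = f := by
  apply Lp.ext
  filter_upwards [coeFn_Wop (Wop f),
    (measurePreserving_add_right μ _).quasiMeasurePreserving.ae_eq_comp (coeFn_Wop f)]
    with x h h'
  simp only [Function.comp_apply] at h'
  rw [h, h', add_assoc, ← AddCircle.coe_add, ← two_mul, AddCircle.coe_period, add_zero]

lemma Wop_Jop (f : L2) : Wop (Jop f) = -Jop (Wop f) := by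
  apply Lp.ext
  filter_upwards [coeFn_Wop (Jop f), Lp.coeFn_neg (Jop (Wop f)), coeFn_Jop (Wop f),
    (measurePreserving_add_right μ _).quasiMeasurePreserving.ae_eq_comp (coeFn_Jop f),
    (Measure.measurePreserving_neg μ).quasiMeasurePreserving.ae_eq_comp (coeFn_Wop f)]
    with x hWJ hneg hJW hJ hW
  simp only [Function.comp_apply] at hJ hW
  rw [hWJ, hneg, Pi.neg_apply, hJW, hJ, hW, fourier_add_apply, fourier_neg_one_pi, neg_add,
    neg_coe_pi]
  ring

lemma coeFn_Jop_Wop (f : L2) :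
    ⇑(Jop (Wop f)) =ᵐ[μ] fun x => fourier (-1) x * f (((π : ℝ) : 𝕋) - x) := by
  filter_upwards [coeFn_Jop (Wop f),
    (Measure.measurePreserving_neg μ).quasiMeasurePreserving.ae_eq_comp (coeFn_Wop f)]
    with x h h'
  simp only [Function.comp_apply] at h'
  rw [h, h', neg_add_eq_sub]

lemma Lmul_Lmul_of_ae_mul_eq_one {φ ψ : 𝕋 → ℂ} (hφ : MemLp φ ⊤ μ) (hψ : MemLp ψ ⊤ μ)
    (h : ∀ᵐ x ∂μ, ψ x * φ x = 1) (f : L2) : Lmul ψ (Lmul φ f) = f := by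
  apply Lp.ext
  filter_upwards [coeFn_Lmul hψ (Lmul φ f), coeFn_Lmul hφ f, h] with x hψx hφx hx
  rw [hψx, hφx, ← mul_assoc, hx, one_mul]

lemma Lmul_bijective {φ ψ : 𝕋 → ℂ} (hφ : MemLp φ ⊤ μ) (hψ : MemLp ψ ⊤ μ)
    (h : ∀ᵐ x ∂μ, φ x * ψ x = 1) : Function.Bijective (Lmul φ) :=
  Function.bijective_iff_has_inverse.mpr ⟨Lmul ψ,
    Lmul_Lmul_of_ae_mul_eq_one hφ hψ (h.mono fun _ hx => by rwa [mul_comm]),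
    Lmul_Lmul_of_ae_mul_eq_one hψ hφ h⟩

lemma memLp_top_comp_pi_sub {g : 𝕋 → ℂ} (hg : MemLp g ⊤ μ) :
    MemLp (fun x => g (((π : ℝ) : 𝕋) - x)) ⊤ μ :=
  hg.comp_measurePreserving measurePreserving_pi_sub

lemma Jop_Wop_Lmul {g : 𝕋 → ℂ} (hg : MemLp g ⊤ μ) (f : L2) :
    Jop (Wop (Lmul g f)) = Lmul (fun x => g (((π : ℝ) : 𝕋) - x)) (Jop (Wop f)) := by
  apply Lp.ext
  filter_upwards [coeFn_Jop_Wop (Lmul g f),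
    coeFn_Lmul (memLp_top_comp_pi_sub hg) (Jop (Wop f)),
    coeFn_Jop_Wop f,
    measurePreserving_pi_sub.quasiMeasurePreserving.ae_eq_comp (coeFn_Lmul hg f)]
    with x hL hR hJW hg'
  simp only [Function.comp_apply] at hg'
  rw [hL, hR, hJW, hg']
  ring

lemma Jop_Wop_fourierLp (n : ℤ) :
    Jop (Wop (fourierLp 2 n)) = fourier n ((π : ℝ) : 𝕋) • fourierLp 2 (-n - 1) := by
  apply Lp.ext
  filter_upwards [coeFn_Jop_Wop (fourierLp 2 n),
    Lp.coeFn_smul (fourier n ((π : ℝ) : 𝕋) : ℂ) (fourierLp 2 (-n - 1)),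
    coeFn_fourierLp 2 (-n - 1),
    measurePreserving_pi_sub.quasiMeasurePreserving.ae_eq_comp (coeFn_fourierLp 2 n)]
    with x hJW hsmul he he'
  simp only [Function.comp_apply] at he'
  rw [hJW, hsmul, Pi.smul_apply, he, he', fourier_sub_apply, smul_eq_mul,
    show -n - 1 = -1 + -n by ring, fourier_add]
  ring

lemma PJ_apply (x : L2) : PJ x = (2 : ℂ)⁻¹ • (x + Jop x) := rfl

lemma PJ_eq_self_iff {x : L2} : PJ x = x ↔ Jop x = x := by
  rw [PJ_apply, inv_smul_eq_iff₀ two_ne_zero, two_smul, add_right_inj, eq_comm]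

lemma mem_L2J_iff {x : L2} : x ∈ L2J ↔ Jop x = x := by
  refine ⟨?_, fun h => ⟨x, PJ_eq_self_iff.mpr h⟩⟩
  rintro ⟨y, rfl⟩
  simp only [ContinuousLinearMap.coe_coe, PJ_apply, map_smul, map_add, Jop_Jop, add_comm]

lemma mem_ker_PJ_iff {x : L2} : x ∈ LinearMap.ker (PJ : L2 →ₗ[ℂ] L2) ↔ Jop x = -x := by
  rw [LinearMap.mem_ker, ContinuousLinearMap.coe_coe, PJ_apply,
    smul_eq_zero_iff_right (inv_ne_zero two_ne_zero), add_comm, add_eq_zero_iff_eq_neg]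

def JW : L2 ≃L[ℂ] L2 :=
  .equivOfInverse (Jop ∘L Wop) (Wop ∘L Jop) (fun f => by simp [Jop_Jop, Wop_Wop])
    (fun f => by simp [Jop_Jop, Wop_Wop])

lemma coe_JW_apply (f : L2) : (JW : L2 →ₗ[ℂ] L2) f = Jop (Wop f) := rfl

lemma map_JW_L2J : L2J.map (JW : L2 →ₗ[ℂ] L2) = LinearMap.ker (PJ : L2 →ₗ[ℂ] L2) := by
  refine Submodule.ext fun y => ?_
  simp only [Submodule.mem_map, mem_L2J_iff, mem_ker_PJ_iff, coe_JW_apply]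
  constructor
  · rintro ⟨x, hx, rfl⟩
    conv_rhs => rw [← hx]
    rw [Wop_Jop, map_neg, Jop_Jop, neg_neg]
  · intro hy
    have hJWy : Jop (Wop y) = Wop y := by simpa [hy] using (Wop_Jop y).symm
    refine ⟨Wop (Jop y), ?_, by rw [Wop_Wop, Jop_Jop]⟩
    rw [hy, map_neg, map_neg, hJWy]

lemma Hardy_eq : Hardy = (span ℂ (fourierBasis '' Set.Ici 0)).topologicalClosure := by
  rw [Hardy, coe_fourierBasis, ← Nat.range_cast_int, ← Set.range_comp]
  rfl

lemma orthogonal_Hardy : Hardyᗮ = (span ℂ (fourierBasis '' Set.Iio 0)).topologicalClosure := by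
  rw [Hardy_eq, HilbertBasis.orthogonal_topologicalClosure_span_image, Set.compl_Ici]

lemma map_JW_orthogonal_Hardy : Hardyᗮ.map (JW : L2 →ₗ[ℂ] L2) = Hardy := by
  rw [orthogonal_Hardy, Hardy_eq, JW.map_topologicalClosure, map_span, coe_fourierBasis]
  congr 1
  apply le_antisymm <;> rw [span_le]
  · rintro _ ⟨_, ⟨n, hn, rfl⟩, rfl⟩
    rw [coe_JW_apply, Jop_Wop_fourierLp]
    exact smul_mem _ _ (subset_span ⟨-n - 1, by simp at hn ⊢; omega, rfl⟩)
  · rintro _ ⟨n, hn, rfl⟩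
    have h := Jop_Wop_fourierLp (-n - 1)
    rw [show -(-n - 1) - 1 = n by ring] at h
    rw [SetLike.mem_coe, ← smul_mem_iff _ (fourier_apply_ne_zero _ _), ← h, ← coe_JW_apply]
    exact subset_span ⟨_, ⟨-n - 1, by simp at hn ⊢; omega, rfl⟩, rfl⟩

lemma Phi_bijective_iff {φ : 𝕋 → ℂ} (hφ : Function.Bijective (Lmul φ)) :
    Function.Bijective (Phi φ) ↔ IsCompl (L2J.map (Lmul φ : L2 →ₗ[ℂ] L2)) Hardyᗮ := by
  have hPhi : ⇑(Phi φ) = ((Hardy.orthogonalProjectionOnto : L2 →ₗ[ℂ] Hardy) ∘ₗ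
      (Lmul φ : L2 →ₗ[ℂ] L2)).domRestrict L2J := by
    funext v
    simp [Phi, PJ_eq_self_iff.mpr (mem_L2J_iff.mp v.2)]
  have hP : Function.Surjective (Hardy.orthogonalProjectionOnto : L2 →ₗ[ℂ] Hardy) :=
    fun v => ⟨v, orthogonalProjectionOnto_mem_subspace_eq_self v⟩
  rw [hPhi, ← ker_orthogonalProjectionOnto]
  exact LinearMap.bijective_domRestrict_comp_iff hP hφ L2J

lemma Psi_bijective_iff {ψ : 𝕋 → ℂ} (hψ : Function.Bijective (Lmul ψ)) :
    Function.Bijective (Psi ψ) ↔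
      IsCompl (Hardy.map (Lmul ψ : L2 →ₗ[ℂ] L2)) (LinearMap.ker (PJ : L2 →ₗ[ℂ] L2)) := by
  have hPsi : ⇑(Psi ψ) =
      ((PJ : L2 →ₗ[ℂ] L2).rangeRestrict ∘ₗ (Lmul ψ : L2 →ₗ[ℂ] L2)).domRestrict Hardy := rfl
  rw [hPsi, ← LinearMap.ker_rangeRestrict]
  exact LinearMap.bijective_domRestrict_comp_iff (LinearMap.surjective_rangeRestrict _) hψ Hardy

/-- For invertible `φ ∈ L^∞` and `ψ(t) = φ⁻¹(-t⁻¹)`, `Φ(φ)` is invertible iff `Ψ(ψ)` is. -/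
theorem stmt_12 (φ : 𝕋 → ℂ) (hφ : MemLp φ ⊤ μ)
    (hφi : MemLp (fun x => (φ x)⁻¹) ⊤ μ) (hφ0 : ∀ᵐ x ∂μ, φ x ≠ 0) :
    Function.Bijective (Phi φ) ↔
      Function.Bijective (Psi fun x => (φ ((Real.pi : ℝ) - x))⁻¹) := by
  set ψ : 𝕋 → ℂ := fun x => (φ (((π : ℝ) : 𝕋) - x))⁻¹
  have hmul : ∀ᵐ x ∂μ, (φ x)⁻¹ * φ x = 1 := hφ0.mono fun _ => inv_mul_cancel₀
  have hmul' : ∀ᵐ x ∂μ, φ x * (φ x)⁻¹ = 1 := hφ0.mono fun _ => mul_inv_cancel₀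
  have hψmul : ∀ᵐ x ∂μ, ψ x * φ (((π : ℝ) : 𝕋) - x) = 1 :=
    measurePreserving_pi_sub.quasiMeasurePreserving.ae (p := fun y => (φ y)⁻¹ * φ y = 1) hmul
  set U := (JW : L2 →ₗ[ℂ] L2) ∘ₗ (Lmul fun x => (φ x)⁻¹ : L2 →ₗ[ℂ] L2)
  have hU : Function.Bijective U := JW.bijective.comp (Lmul_bijective hφi hφ hmul)
  have hU_L2J : (L2J.map (Lmul φ : L2 →ₗ[ℂ] L2)).map U = LinearMap.ker (PJ : L2 →ₗ[ℂ] L2) := by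
    have hUφ : U ∘ₗ (Lmul φ : L2 →ₗ[ℂ] L2) = JW :=
      LinearMap.ext fun f => congrArg JW (Lmul_Lmul_of_ae_mul_eq_one hφ hφi hmul f)
    rw [← map_comp, hUφ, map_JW_L2J]
  have hU_orthogonal : Hardyᗮ.map U = Hardy.map (Lmul ψ : L2 →ₗ[ℂ] L2) := by
    have hUψ : U = (Lmul ψ : L2 →ₗ[ℂ] L2) ∘ₗ (JW : L2 →ₗ[ℂ] L2) :=
      LinearMap.ext (Jop_Wop_Lmul hφi)
    rw [hUψ, map_comp, map_JW_orthogonal_Hardy]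
  rw [Phi_bijective_iff (Lmul_bijective hφ hφi hmul'),
    Psi_bijective_iff
      (Lmul_bijective (memLp_top_comp_pi_sub hφi) (memLp_top_comp_pi_sub hφ) hψmul),
    ← isCompl_map_iff_of_bijective hU, hU_L2J, hU_orthogonal, isCompl_comm]

end TH
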